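/- Let X and Y be topological spaces and let f, g : Closed(X) → Closed(Y) be admissible maps. Then the identity map id : X +_f Y → X +_g Y is continuous if and only if f(A) ⊆ g(A) for every closed A ⊆ X. -/

import Mathlib

namespace Paper

open Set Topology

/-! ### Coarse structures -/

/-- The inverse of a relation `e ⊆ X × X`. -/
def invRel {X : Type*} (e : Set (X × X)) : Set (X × X) := {p | (p.2, p.1) ∈ e}

/-- The composition of relations: `compRel e e' = {(a,b) | ∃ c, (a,c) ∈ e ∧ (c,b) ∈ e'}`.
This is `e' ∘ e` in the paper's notation. -/
def compRel {X : Type*} (e e' : Set (X × X)) : Set (X × X) :=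
  {p | ∃ c, (p.1, c) ∈ e ∧ (c, p.2) ∈ e'}

/-- A coarse structure on a set `X`. -/
def IsCoarseStructure {X : Type*} (ε : Set (Set (X × X))) : Prop :=
  Set.diagonal X ∈ ε ∧
  (∀ e ∈ ε, ∀ e' : Set (X × X), e' ⊆ e → e' ∈ ε) ∧
  (∀ e ∈ ε, ∀ e' ∈ ε, e ∪ e' ∈ ε) ∧
  (∀ e ∈ ε, invRel e ∈ ε) ∧
  (∀ e ∈ ε, ∀ e' ∈ ε, compRel e e' ∈ ε)

/-- The coarse structure generated by a family `A` of subsets of `X × X`: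
the intersection of all coarse structures containing `A`. -/
def genCoarse {X : Type*} (A : Set (Set (X × X))) : Set (Set (X × X)) :=
  ⋂₀ {ε | IsCoarseStructure ε ∧ A ⊆ ε}

/-- The `u`-neighbourhood `𝔅(B, u)` of a subset `B`. -/
def Bnh {X : Type*} (B : Set X) (u : Set (X × X)) : Set X := {x | ∃ y ∈ B, (x, y) ∈ u}

/-- A subset `B` is bounded for the coarse structure `ε` if `B × B ∈ ε`. -/
def CBounded {X : Type*} (ε : Set (Set (X × X))) (B : Set X) : Prop := B ×ˢ B ∈ ε

/-- A map is bornologous if it sends entourages to entourages. -/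
def Bornologous {X Y : Type*} (ε : Set (Set (X × X))) (ζ : Set (Set (Y × Y)))
    (f : X → Y) : Prop :=
  ∀ e ∈ ε, Prod.map f f '' e ∈ ζ

/-- A map is (coarsely) proper if preimages of bounded sets are bounded. -/
def CProper {X Y : Type*} (ε : Set (Set (X × X))) (ζ : Set (Set (Y × Y)))
    (f : X → Y) : Prop :=
  ∀ B : Set Y, CBounded ζ B → CBounded ε (f ⁻¹' B)

/-- A coarse map is a proper bornologous map. -/
def CoarseMap {X Y : Type*} (ε : Set (Set (X × X))) (ζ : Set (Set (Y × Y)))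
    (f : X → Y) : Prop :=
  Bornologous ε ζ f ∧ CProper ε ζ f

/-- Two maps `f g : S → X` are close if `{(f s, g s) | s ∈ S}` is an entourage. -/
def Close {S X : Type*} (ε : Set (Set (X × X))) (f g : S → X) : Prop :=
  Set.range (fun s => (f s, g s)) ∈ ε

/-- A coarse equivalence: a coarse map with a coarse quasi-inverse. -/
def CoarseEquiv {X Y : Type*} (ε : Set (Set (X × X))) (ζ : Set (Set (Y × Y)))
    (f : X → Y) : Prop :=
  CoarseMap ε ζ f ∧
    ∃ g : Y → X, CoarseMap ζ ε g ∧ Close ζ (f ∘ g) id ∧ Close ε (g ∘ f) id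

/-- The subspace coarse structure on `A ⊆ Y`. -/
def SubCoarse {Y : Type*} (ζ : Set (Set (Y × Y))) (A : Set Y) : Set (Set (↥A × ↥A)) :=
  {e | Prod.map (Subtype.val : A → Y) (Subtype.val : A → Y) '' e ∈ ζ}

/-- A coarse embedding: a coarse map which is a coarse equivalence onto its image with
the subspace coarse structure. -/
def CoarseEmbedding {X Y : Type*} (ε : Set (Set (X × X))) (ζ : Set (Set (Y × Y)))
    (f : X → Y) : Prop :=
  CoarseMap ε ζ f ∧ CoarseEquiv ε (SubCoarse ζ (Set.range f)) (Set.rangeFactorization f)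

/-- A coarse space is coarsely connected if every pair lies in some entourage. -/
def CoarselyConnected {X : Type*} (ε : Set (Set (X × X))) : Prop :=
  ∀ x y : X, ∃ e ∈ ε, (x, y) ∈ e

/-- `A` is quasi-dense if `𝔅(A, e) = X` for some entourage `e`. -/
def QuasiDense {X : Type*} (ε : Set (Set (X × X))) (A : Set X) : Prop :=
  ∃ e ∈ ε, Bnh A e = Set.univ

/-- A subset of a topological space is topologically bounded if its closure is compact. -/
def TopBounded {X : Type*} [TopologicalSpace X] (B : Set X) : Prop := IsCompact (closure B)

/-- A coarse structure on a topological space is proper if it contains a neighbourhood of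
the diagonal and every bounded set is topologically bounded. -/
def ProperCoarse {X : Type*} [TopologicalSpace X] (ε : Set (Set (X × X))) : Prop :=
  (∃ e ∈ ε, e ∈ nhdsSet (Set.diagonal X)) ∧ ∀ B : Set X, CBounded ε B → TopBounded B

/-! ### Artin–Wraith glueings -/

/-- An admissible map `f : Closed(X) → Closed(Y)`. -/
def Admissible {X Y : Type*} [TopologicalSpace X] [TopologicalSpace Y]
    (f : Set X → Set Y) : Prop :=
  (∀ A : Set X, IsClosed A → IsClosed (f A)) ∧
  (∀ A B : Set X, IsClosed A → IsClosed B → f (A ∪ B) = f A ∪ f B) ∧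
  f ∅ = ∅

/-- The closed sets of the Artin–Wraith glueing `X +_f Y`. -/
def AWClosed {X Y : Type*} [TopologicalSpace X] [TopologicalSpace Y]
    (f : Set X → Set Y) : Set (Set (X ⊕ Y)) :=
  {A | IsClosed (Sum.inl ⁻¹' A) ∧ IsClosed (Sum.inr ⁻¹' A) ∧
    Sum.inr '' f (Sum.inl ⁻¹' A) ⊆ A}

/-- The topology of the Artin–Wraith glueing `X +_f Y` on `X ⊕ Y`. (For admissible `f`,
the closed sets of this topology are exactly the members of `AWClosed f`.) -/
def AWTop {X Y : Type*} [TopologicalSpace X] [TopologicalSpace Y]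
    (f : Set X → Set Y) : TopologicalSpace (X ⊕ Y) :=
  TopologicalSpace.generateFrom (compl '' AWClosed f)

/-- `X +_f W` is a (Hausdorff) compactification of `X`: a compact Hausdorff Artin–Wraith
glueing in which `X` is dense. -/
def IsCompactification {X W : Type*} [TopologicalSpace X] [TopologicalSpace W]
    (f : Set X → Set W) : Prop :=
  Admissible f ∧
  @CompactSpace (X ⊕ W) (AWTop f) ∧
  @T2Space (X ⊕ W) (AWTop f) ∧
  @Dense (X ⊕ W) (AWTop f) (Set.range Sum.inl)

/-- A relation `e ⊆ X × X` is proper if `𝔅(B,e)` and `𝔅(B,e⁻¹)` are topologically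
bounded for every topologically bounded `B`. -/
def ProperRel {X : Type*} [TopologicalSpace X] (e : Set (X × X)) : Prop :=
  ∀ B : Set X, TopBounded B → TopBounded (Bnh B e) ∧ TopBounded (Bnh B (invRel e))

/-- `e` is a perspective subset of `X × X` with respect to the compactification `X +_f W`. -/
def PerspRel {X W : Type*} [TopologicalSpace X] [TopologicalSpace W]
    (f : Set X → Set W) (e : Set (X × X)) : Prop :=
  ProperRel e ∧
  ∀ y : W, ∀ V : Set (X ⊕ W), IsOpen[AWTop f] V → Sum.inr y ∈ V →
    ∃ U : Set (X ⊕ W), IsOpen[AWTop f] U ∧ Sum.inr y ∈ U ∧ U ⊆ V ∧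
      ∀ p ∈ e, Sum.inl p.1 ∈ U → Sum.inl p.2 ∈ V

/-- A perspective compactification of the coarse space `(X, ε)`. -/
def PerspCompactification {X W : Type*} [TopologicalSpace X] [TopologicalSpace W]
    (ε : Set (Set (X × X))) (f : Set X → Set W) : Prop :=
  IsCompactification f ∧ ∀ e ∈ ε, PerspRel f e

/-- The pullback of `f : Closed(X) → Closed(W)` with respect to `π : Y → X` and
`ϖ : Z → W`. -/
def pullbackAW {X Y Z W : Type*} [TopologicalSpace X] [TopologicalSpace Z]
    (f : Set X → Set W) (π : Y → X) (ϖ : Z → W) (A : Set Y) : Set Z :=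
  closure (ϖ ⁻¹' (f (closure (π '' A))))

/-! ### Group actions -/

/-- `φ : G → X → X` is an action by homeomorphisms. -/
def IsActionByHomeos {G X : Type*} [Group G] [TopologicalSpace X]
    (φ : G → X → X) : Prop :=
  (∀ g : G, Continuous (φ g)) ∧ (∀ x : X, φ 1 x = x) ∧
    ∀ g h : G, ∀ x : X, φ (g * h) x = φ g (φ h x)

/-- A properly discontinuous action. -/
def ProperlyDisc {G X : Type*} [TopologicalSpace X] (φ : G → X → X) : Prop :=
  ∀ K : Set X, IsCompact K → {g : G | (φ g '' K ∩ K).Nonempty}.Finite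

/-- A cocompact action. -/
def CocompactAct {G X : Type*} [TopologicalSpace X] (φ : G → X → X) : Prop :=
  ∃ K : Set X, IsCompact K ∧ (⋃ g : G, φ g '' K) = Set.univ

/-- The saturation `Sat(A) = {(φ(g,x), φ(g,x')) : g ∈ G, x, x' ∈ A}`. -/
def Sat {G X : Type*} (φ : G → X → X) (A : Set X) : Set (X × X) :=
  {p | ∃ g : G, ∃ x ∈ A, ∃ x' ∈ A, p = (φ g x, φ g x')}

/-- The coarse structure `ε_φ` on `X` generated by the saturations of topologically
bounded sets. -/
def coarseOfAction {G X : Type*} [TopologicalSpace X] (φ : G → X → X) :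
    Set (Set (X × X)) :=
  genCoarse {e | ∃ A : Set X, TopBounded A ∧ e = Sat φ A}

/-- The saturation for the left multiplication action of a group on itself. -/
def SatMul {G : Type*} [Group G] (U : Set G) : Set (G × G) :=
  {p | ∃ g : G, ∃ u ∈ U, ∃ u' ∈ U, p = (g * u, g * u')}

/-- The coarse structure `ε_G` on the group `G`, generated by the saturations of
finite subsets under the left multiplication action. -/
def coarseGroup (G : Type*) [Group G] : Set (Set (G × G)) :=
  genCoarse {e | ∃ U : Set G, U.Finite ∧ e = SatMul U}

/-- The compactification `X +_f W` is group-theoretically perspective with respect to the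
action `φ`. -/
def GTPerspective {G X W : Type*} [TopologicalSpace X] [TopologicalSpace W]
    (φ : G → X → X) (f : Set X → Set W) : Prop :=
  ∀ K : Set X, IsCompact K → ∀ y : W, ∀ U : Set (X ⊕ W),
    IsOpen[AWTop f] U → Sum.inr y ∈ U →
      ∃ V : Set (X ⊕ W), IsOpen[AWTop f] V ∧ Sum.inr y ∈ V ∧ V ⊆ U ∧
        ∀ g : G, (∃ x ∈ K, Sum.inl (φ g x) ∈ V) → ∀ x ∈ K, Sum.inl (φ g x) ∈ U

/-! ### Rays and accessibility -/

/-- A family `Ψ` of rays in `X` based at `p`: each member is a pair `(A, γ)` of a closed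
unbounded subset `A ⊆ [0,∞)` containing `0` and a map `γ : ℝ → X` (regarded on `A`) which
is injective on `A`, proper, and satisfies `γ 0 = p`. -/
def GoodRayFamily {X : Type*} [TopologicalSpace X] (p : X)
    (Ψ : Set (Set ℝ × (ℝ → X))) : Prop :=
  ∀ r ∈ Ψ, r.1 ⊆ Set.Ici (0 : ℝ) ∧ IsClosed r.1 ∧ ¬Bornology.IsBounded r.1 ∧
    (0 : ℝ) ∈ r.1 ∧ r.2 0 = p ∧ Set.InjOn r.2 r.1 ∧
    ∀ B : Set X, TopBounded B → Bornology.IsBounded (r.1 ∩ r.2 ⁻¹' B)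

/-- The compactification `X +_f W` is `Ψ`-accessible. -/
def AccessibleComp {X W : Type*} [TopologicalSpace X] [TopologicalSpace W]
    (f : Set X → Set W) (Ψ : Set (Set ℝ × (ℝ → X))) : Prop :=
  (∀ w : W, ∃ r ∈ Ψ, f (closure (r.2 '' r.1)) = {w}) ∧
  ∀ r ∈ Ψ, ∃ w : W, f (closure (r.2 '' r.1)) = {w}

/-!
Admissibility of `f` is what makes `AWClosed f` closed under finite unions and
arbitrary intersections, so it is the family of closed sets of `X +_f Y`. Continuity of the
identity therefore means `AWClosed g ⊆ AWClosed f`, and testing this on the sets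
`A ⊔ g(A)` with `A` closed gives `f(A) ⊆ g(A)`.
-/

section ArtinWraith

variable {X Y : Type*} [TopologicalSpace X] [TopologicalSpace Y]

theorem Admissible.mono {f : Set X → Set Y} (hf : Admissible f) {A B : Set X}
    (hA : IsClosed A) (hB : IsClosed B) (hAB : A ⊆ B) : f A ⊆ f B := by
  rw [← union_eq_self_of_subset_left hAB, hf.2.1 A B hA hB]
  exact subset_union_left

theorem empty_mem_AWClosed {f : Set X → Set Y} (hf : Admissible f) :
    (∅ : Set (X ⊕ Y)) ∈ AWClosed f :=
  ⟨isClosed_empty, isClosed_empty, by simp [hf.2.2]⟩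

theorem union_mem_AWClosed {f : Set X → Set Y} (hf : Admissible f) {C D : Set (X ⊕ Y)}
    (hC : C ∈ AWClosed f) (hD : D ∈ AWClosed f) : C ∪ D ∈ AWClosed f := by
  refine ⟨hC.1.union hD.1, hC.2.1.union hD.2.1, ?_⟩
  rw [preimage_union, hf.2.1 _ _ hC.1 hD.1, image_union]
  exact union_subset_union hC.2.2 hD.2.2

theorem sInter_mem_AWClosed {f : Set X → Set Y} (hf : Admissible f) {S : Set (Set (X ⊕ Y))}
    (hS : S ⊆ AWClosed f) : ⋂₀ S ∈ AWClosed f := by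
  have hX : IsClosed (Sum.inl ⁻¹' ⋂₀ S : Set X) := by
    rw [preimage_sInter]
    exact isClosed_biInter fun C hC ↦ (hS hC).1
  refine ⟨hX, ?_, subset_sInter fun C hC ↦ ?_⟩
  · rw [preimage_sInter]
    exact isClosed_biInter fun C hC ↦ (hS hC).2.1
  · refine (image_mono (hf.mono hX (hS hC).1 ?_)).trans (hS hC).2.2
    exact preimage_mono (sInter_subset_of_mem hC)

theorem AWTop_eq_ofClosed {f : Set X → Set Y} (hf : Admissible f) :
    AWTop f = .ofClosed (AWClosed f) (empty_mem_AWClosed hf)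
      (fun _ ↦ sInter_mem_AWClosed hf) (fun _ hC _ hD ↦ union_mem_AWClosed hf hC hD) := by
  refine le_antisymm ?_ (TopologicalSpace.le_generateFrom_iff_subset_isOpen.2 ?_)
  · rw [TopologicalSpace.le_def]
    intro U hU
    exact TopologicalSpace.GenerateOpen.basic U ⟨Uᶜ, hU, compl_compl U⟩
  · rintro _ ⟨C, hC, rfl⟩
    show Cᶜᶜ ∈ AWClosed f
    rwa [compl_compl]

theorem isClosed_AWTop_iff {f : Set X → Set Y} (hf : Admissible f) {C : Set (X ⊕ Y)} :
    IsClosed[AWTop f] C ↔ C ∈ AWClosed f := by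
  rw [← @isOpen_compl_iff _ _ (AWTop f), AWTop_eq_ofClosed hf]
  show Cᶜᶜ ∈ AWClosed f ↔ _
  rw [compl_compl]

theorem continuous_id_AWTop_iff {f g : Set X → Set Y} (hf : Admissible f)
    (hg : Admissible g) :
    Continuous[AWTop f, AWTop g] (id : X ⊕ Y → X ⊕ Y) ↔ AWClosed g ⊆ AWClosed f := by
  rw [@continuous_iff_isClosed _ _ (AWTop f) (AWTop g)]
  simp only [preimage_id, isClosed_AWTop_iff hf, isClosed_AWTop_iff hg]
  rfl

theorem inl_image_union_inr_image_mem_AWClosed_iff {f : Set X → Set Y} {A : Set X}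
    {B : Set Y} :
    Sum.inl '' A ∪ Sum.inr '' B ∈ AWClosed f ↔ IsClosed A ∧ IsClosed B ∧ f A ⊆ B := by
  simp only [AWClosed, mem_ofPred_eq, image_subset_iff, preimage_union, preimage_inl_image_inr,
    preimage_inr_image_inl, Sum.inl_injective.preimage_image,
    Sum.inr_injective.preimage_image, union_empty, empty_union]

theorem AWClosed_subset_iff {f g : Set X → Set Y} (hg : Admissible g) :
    AWClosed g ⊆ AWClosed f ↔ ∀ A : Set X, IsClosed A → f A ⊆ g A := by
  refine ⟨fun h A hA ↦ ?_, fun h C hC ↦ ⟨hC.1, hC.2.1, ?_⟩⟩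
  · have hAg := inl_image_union_inr_image_mem_AWClosed_iff.2 ⟨hA, hg.1 A hA, subset_rfl⟩
    exact (inl_image_union_inr_image_mem_AWClosed_iff.1 (h hAg)).2.2
  · exact (image_mono (h _ hC.1)).trans hC.2.2

end ArtinWraith

/-- the identity `X +_f Y → X +_g Y` is continuous iff `f A ⊆ g A`
for every closed `A ⊆ X`. -/
theorem stmt18 {X Y : Type*} [TopologicalSpace X] [TopologicalSpace Y]
    (f g : Set X → Set Y) (hf : Admissible f) (hg : Admissible g) :
    Continuous[AWTop f, AWTop g] (id : X ⊕ Y → X ⊕ Y) ↔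
      ∀ A : Set X, IsClosed A → f A ⊆ g A := by
  rw [continuous_id_AWTop_iff hf hg, AWClosed_subset_iff hg]

end Paper
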